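/- arXiv:1602.05478 — 2 statements merged into one kernel-verified Lean document; each statement's English description precedes it below -/
import Mathlib

section
/- A lower transition operator T on a finite nonempty set 𝒳 is ergodic (for all f ∈ 𝓛(𝒳), lim_{n→∞} T^n f exists and is a constant function) if and only if T is regularly absorbing. -/
open Filter Topology

/-- The minimum of a real-valued function on a finite nonempty type. -/
noncomputable def minf {X : Type*} [Fintype X] [Nonempty X] (f : X → ℝ) : ℝ :=
  Finset.univ.inf' Finset.univ_nonempty f

/-- The maximum of a real-valued function on a finite nonempty type. -/
noncomputable def maxf {X : Type*} [Fintype X] [Nonempty X] (f : X → ℝ) : ℝ :=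
  Finset.univ.sup' Finset.univ_nonempty f

/-- The (real-valued) indicator function of a set. -/
noncomputable def ind {X : Type*} (A : Set X) : X → ℝ := A.indicator 1

/-- The conjugate (upper) operator `f ↦ -(Q (-f))`. -/
def conjOp {X : Type*} (Q : (X → ℝ) → (X → ℝ)) : (X → ℝ) → (X → ℝ) :=
  fun f => -(Q (-f))

/-- A lower transition rate operator. -/
def IsLTRO {X : Type*} [Fintype X] (Q : (X → ℝ) → (X → ℝ)) : Prop :=
  (∀ μ : ℝ, Q (fun _ => μ) = 0) ∧
  (∀ f g : X → ℝ, Q f + Q g ≤ Q (f + g)) ∧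
  (∀ l : ℝ, 0 ≤ l → ∀ f : X → ℝ, Q (l • f) = l • Q f) ∧
  (∀ x y : X, x ≠ y → 0 ≤ Q (ind {y}) x)

/-- A lower transition operator. -/
def IsLTO {X : Type*} [Fintype X] [Nonempty X] (T : (X → ℝ) → (X → ℝ)) : Prop :=
  (∀ f : X → ℝ, ∀ x : X, minf f ≤ T f x) ∧
  (∀ f g : X → ℝ, T f + T g ≤ T (f + g)) ∧
  (∀ l : ℝ, 0 ≤ l → ∀ f : X → ℝ, T (l • f) = l • T f)

/-- `T` is the family of operators solving `d/dt T_t f = Q (T_t f)` on `[0,∞)`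
with `T_0 f = f`. -/
def IsSol {X : Type*} [Fintype X] (Q : (X → ℝ) → (X → ℝ))
    (T : ℝ → (X → ℝ) → (X → ℝ)) : Prop :=
  (∀ f : X → ℝ, T 0 f = f) ∧
  (∀ f : X → ℝ, ∀ t : ℝ, 0 ≤ t →
    HasDerivWithinAt (fun s => T s f) (Q (T t f)) (Set.Ici 0) t)

/-- Ergodicity of a lower transition rate operator, expressed via its
associated time-dependent family `T`. -/
def ErgodicQ {X : Type*} [Fintype X] (T : ℝ → (X → ℝ) → (X → ℝ)) : Prop :=
  ∀ f : X → ℝ, ∃ c : ℝ, Tendsto (fun t => T t f) atTop (𝓝 (fun _ : X => c))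

/-- Ergodicity of a lower transition operator. -/
def ErgodicT {X : Type*} [Fintype X] (T : (X → ℝ) → (X → ℝ)) : Prop :=
  ∀ f : X → ℝ, ∃ c : ℝ, Tendsto (fun n : ℕ => T^[n] f) atTop (𝓝 (fun _ : X => c))

/-- `x` is upper reachable from `y` (w.r.t. the lower transition rate operator `Q`). -/
def upperReach {X : Type*} [Fintype X] (Q : (X → ℝ) → (X → ℝ)) (y x : X) : Prop :=
  ∃ (n : ℕ) (p : ℕ → X), p 0 = y ∧ p n = x ∧
    ∀ k : ℕ, k < n → p (k + 1) ≠ p k ∧ 0 < conjOp Q (ind {p (k + 1)}) (p k)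

/-- One step of the lower-reachability construction: `A ↦ A ∪ {y ∉ A : Q(𝟙_A)(y) > 0}`. -/
def lowerStep {X : Type*} [Fintype X] (Q : (X → ℝ) → (X → ℝ)) (A : Set X) : Set X :=
  A ∪ {y : X | y ∉ A ∧ 0 < Q (ind A) y}

/-- `A` is lower reachable from `x`: `x ∈ Aₙ` where `n` is the first index with
`Aₙ = Aₙ₊₁` (equivalently, any such index, since the sequence is determined by
recursion and increasing). -/
def lowerReach {X : Type*} [Fintype X] (Q : (X → ℝ) → (X → ℝ)) (x : X) (A : Set X) : Prop :=
  ∃ n : ℕ, (lowerStep Q)^[n] A = (lowerStep Q)^[n + 1] A ∧ x ∈ (lowerStep Q)^[n] A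

/-- The set `𝒳_RA := {x : ∃ n ≥ 1, min T̄ⁿ 𝟙ₓ > 0}`. -/
noncomputable def XRA {X : Type*} [Fintype X] [Nonempty X]
    (T : (X → ℝ) → (X → ℝ)) : Set X :=
  {x : X | ∃ n : ℕ, 0 < minf ((conjOp T)^[n + 1] (ind {x}))}

/-- A regularly absorbing lower transition operator. -/
def RegAbs {X : Type*} [Fintype X] [Nonempty X] (T : (X → ℝ) → (X → ℝ)) : Prop :=
  (XRA T).Nonempty ∧ ∀ x : X, x ∉ XRA T → ∃ n : ℕ, 0 < T^[n + 1] (ind (XRA T)) x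

/-- The set `𝒳_1A := {x : min T̄ 𝟙ₓ > 0}`. -/
noncomputable def X1A {X : Type*} [Fintype X] [Nonempty X]
    (T : (X → ℝ) → (X → ℝ)) : Set X :=
  {x : X | 0 < minf (conjOp T (ind {x}))}

/-- A 1-step absorbing lower transition operator. -/
def OneStepAbs {X : Type*} [Fintype X] [Nonempty X] (T : (X → ℝ) → (X → ℝ)) : Prop :=
  (X1A T).Nonempty ∧ ∀ x : X, x ∉ X1A T → 0 < T (ind (X1A T)) x

/-- The operator (sup) norm of a non-negatively homogeneous operator. -/
noncomputable def opN {X : Type*} [Fintype X] (Q : (X → ℝ) → (X → ℝ)) : ℝ :=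
  sSup {r : ℝ | ∃ f : X → ℝ, ‖f‖ = 1 ∧ r = ‖Q f‖}

/-!
(⇒) For each `x`, `T̄ⁿ 𝟙ₓ` converges to a constant `u x ≥ 0`, and `u x > 0` puts `x` in `𝒳_RA`.
Subadditivity of `T̄ⁿ` gives `∑ₓ u x ≥ T̄ⁿ 1 = 1`, so `𝒳_RA` is nonempty, and
`Tⁿ 𝟙_{𝒳_RA} ≥ 1 - ∑_{z ∉ 𝒳_RA} T̄ⁿ 𝟙_z → 1`.

(⇐) `min Tⁿ f` increases to some `a` and `max Tⁿ f` decreases to some `b`. If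
`min T̄ᴺ 𝟙ₓ = δ > 0` then `max Tⁿ⁺ᴺ f ≤ max Tⁿ f - δ (max Tⁿ f - Tⁿ f x)`, which forces
`Tⁿ f x → b` on `𝒳_RA`. If `a < b`, a state outside `𝒳_RA` moves into `𝒳_RA` with positive lower
probability, so eventually `Tⁿ f x > a` at every state, contradicting `min Tⁿ f ≤ a`.
-/

section MinMax

variable {X : Type*} [Fintype X] [Nonempty X]

lemma minf_le (f : X → ℝ) (x : X) : minf f ≤ f x :=
  Finset.inf'_le _ (Finset.mem_univ x)

lemma le_minf {f : X → ℝ} {c : ℝ} (h : ∀ x, c ≤ f x) : c ≤ minf f :=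
  Finset.le_inf' _ _ fun x _ => h x

lemma lt_minf {f : X → ℝ} {c : ℝ} (h : ∀ x, c < f x) : c < minf f :=
  (Finset.lt_inf'_iff _).2 fun x _ => h x

lemma minf_const (c : ℝ) : minf (fun _ : X => c) = c :=
  Finset.inf'_const _ _

lemma le_maxf (f : X → ℝ) (x : X) : f x ≤ maxf f :=
  Finset.le_sup' _ (Finset.mem_univ x)

lemma maxf_le {f : X → ℝ} {c : ℝ} (h : ∀ x, f x ≤ c) : maxf f ≤ c :=
  Finset.sup'_le _ _ fun x _ => h x

end MinMax

section Indicator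

variable {X : Type*}

lemma ind_nonneg (A : Set X) : 0 ≤ ind A :=
  Set.indicator_nonneg fun _ _ => zero_le_one

lemma ind_univ : ind (Set.univ : Set X) = fun _ => 1 :=
  Set.indicator_univ _

lemma ind_compl_add_ind (A : Set X) : ind Aᶜ + ind A = fun _ => 1 :=
  Set.indicator_compl_add_self _ _

lemma sum_ind_singleton [DecidableEq X] (s : Finset X) :
    ∑ z ∈ s, ind ({z} : Set X) = ind (s : Set X) := by
  funext y
  simp [ind, Set.indicator_apply, Finset.sum_apply]

end Indicator

lemma conjOp_comp {X : Type*} (S R : (X → ℝ) → (X → ℝ)) :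
    conjOp (S ∘ R) = conjOp S ∘ conjOp R := by
  funext f
  simp [conjOp]

lemma conjOp_iterate {X : Type*} (T : (X → ℝ) → (X → ℝ)) (n : ℕ) :
    conjOp T^[n] = (conjOp T)^[n] := by
  induction n with
  | zero => funext f; simp [conjOp]
  | succ n ih => rw [Function.iterate_succ', conjOp_comp, ih, ← Function.iterate_succ']

lemma ErgodicT.conjOp {X : Type*} [Fintype X] {T : (X → ℝ) → (X → ℝ)} (hE : ErgodicT T) :
    ErgodicT (conjOp T) := by
  intro f
  obtain ⟨c, hc⟩ := hE (-f)
  refine ⟨-c, ?_⟩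
  simp only [← conjOp_iterate]
  exact hc.neg

lemma mem_XRA_of_tendsto {X : Type*} [Fintype X] [Nonempty X] {T : (X → ℝ) → (X → ℝ)} {x : X}
    {u : ℝ} (h : Tendsto (fun n => (conjOp T)^[n] (ind {x})) atTop (𝓝 fun _ => u)) (hu : 0 < u) :
    x ∈ XRA T := by
  have hev : ∀ᶠ n in atTop, ∀ y, 0 < (conjOp T)^[n] (ind {x}) y :=
    eventually_all.2 fun y => (tendsto_pi_nhds.1 h y).eventually (eventually_gt_nhds hu)
  obtain ⟨n, hn⟩ := ((tendsto_add_atTop_nat 1).eventually hev).exists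
  exact ⟨n, lt_minf hn⟩

namespace IsLTO

variable {X : Type*} [Fintype X] [Nonempty X] {T : (X → ℝ) → (X → ℝ)} (hT : IsLTO T)
include hT

lemma mono {f g : X → ℝ} (h : f ≤ g) : T f ≤ T g := by
  have hgf : 0 ≤ T (g - f) := fun x =>
    (le_minf fun y => sub_nonneg.2 (h y)).trans (hT.1 _ x)
  simpa using (add_le_add le_rfl hgf).trans (hT.2.1 f (g - f))

lemma map_zero : T 0 = 0 := by
  simpa using hT.2.2 0 le_rfl 0

lemma map_add_le_add_conjOp (f g : X → ℝ) : T (f + g) ≤ T f + conjOp T g := by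
  have h := hT.2.1 (f + g) (-g)
  rw [add_neg_cancel_right] at h
  intro x
  have hx := h x
  simp only [Pi.add_apply, conjOp, Pi.neg_apply] at hx ⊢
  linarith

lemma le_conjOp (f : X → ℝ) : T f ≤ conjOp T f := by
  have h := hT.2.1 f (-f)
  rw [add_neg_cancel, hT.map_zero] at h
  exact le_neg_iff_add_nonpos_right.2 h

lemma map_const (c : ℝ) : T (fun _ => c) = fun _ => c := by
  refine le_antisymm (fun x => ?_) fun x => (minf_const c).symm.le.trans (hT.1 _ x)
  have hsum : (fun _ : X => c) + (fun _ => -c) = 0 := by funext; simp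
  have h := hT.2.1 (fun _ => c) (fun _ => -c) x
  rw [hsum, hT.map_zero] at h
  have hneg := (minf_const (-c)).symm.le.trans (hT.1 (fun _ => -c) x)
  simp only [Pi.add_apply, Pi.zero_apply] at h
  linarith

lemma map_add_const (f : X → ℝ) (c : ℝ) :
    T (f + fun _ => c) = T f + fun _ => c := by
  refine le_antisymm (fun x => ?_) (by simpa only [hT.map_const] using hT.2.1 f fun _ => c)
  have h := hT.2.1 (f + fun _ => c) (fun _ => -c) x
  rw [hT.map_const] at h
  simp only [Pi.add_apply] at h ⊢
  have : (f + (fun _ => c)) + (fun _ => -c) = f := by funext; simp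
  rw [this] at h
  linarith

lemma apply_le_maxf (f : X → ℝ) (x : X) : T f x ≤ maxf f := by
  simpa [hT.map_const] using hT.mono (g := fun _ => maxf f) (le_maxf f) x

lemma comp {S : (X → ℝ) → (X → ℝ)} (hS : IsLTO S) : IsLTO (S ∘ T) :=
  ⟨fun f x => (le_minf fun y => hT.1 f y).trans (hS.1 _ x),
   fun f g => (hS.2.1 _ _).trans (hS.mono (hT.2.1 f g)),
   fun l hl f => by simp only [Function.comp_apply, hT.2.2 l hl, hS.2.2 l hl]⟩

lemma iterate (n : ℕ) : IsLTO T^[n] := by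
  induction n with
  | zero => exact ⟨fun f x => minf_le f x, fun _ _ => le_rfl, fun _ _ _ => rfl⟩
  | succ n ih => rw [Function.iterate_succ]; exact hT.comp ih

lemma minf_le_conjOp (f : X → ℝ) (x : X) : minf f ≤ conjOp T f x :=
  (hT.1 f x).trans (hT.le_conjOp f x)

lemma conjOp_zero : conjOp T 0 = 0 := by
  simp [conjOp, hT.map_zero]

lemma conjOp_add_le (f g : X → ℝ) : conjOp T (f + g) ≤ conjOp T f + conjOp T g := by
  intro x
  have h := hT.2.1 (-f) (-g) x
  simp only [conjOp, Pi.add_apply, Pi.neg_apply, neg_add] at h ⊢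
  linarith

lemma conjOp_mono {f g : X → ℝ} (h : f ≤ g) : conjOp T f ≤ conjOp T g :=
  neg_le_neg (hT.mono (neg_le_neg h))

lemma conjOp_smul {l : ℝ} (hl : 0 ≤ l) (f : X → ℝ) : conjOp T (l • f) = l • conjOp T f := by
  simp [conjOp, ← smul_neg, hT.2.2 l hl]

lemma conjOp_const_sub (c : ℝ) (g : X → ℝ) :
    conjOp T ((fun _ => c) - g) = (fun _ => c) - T g := by
  have : -((fun _ : X => c) - g) = g + fun _ => -c := by funext; simp; ring
  simp only [conjOp, this, hT.map_add_const]
  funext; simp; ring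

lemma conjOp_const (c : ℝ) : conjOp T (fun _ => c) = fun _ => c := by
  simpa [hT.map_zero] using hT.conjOp_const_sub c 0

lemma conjOp_ind_le_sum [DecidableEq X] (s : Finset X) :
    conjOp T (ind s) ≤ ∑ z ∈ s, conjOp T (ind {z}) := by
  rw [← sum_ind_singleton]
  exact Finset.le_sum_of_subadditive _ hT.conjOp_zero.le hT.conjOp_add_le s _

lemma one_sub_sum_conjOp_le [DecidableEq X] (s : Finset X) :
    (fun _ => 1) - ∑ z ∈ s, conjOp T (ind {z}) ≤ T (ind (s : Set X)ᶜ) := by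
  have h := hT.map_add_le_add_conjOp (ind (s : Set X)ᶜ) (ind s)
  rw [ind_compl_add_ind, hT.map_const] at h
  have := hT.conjOp_ind_le_sum s
  intro x
  have hx := h x
  have := this x
  simp only [Pi.sub_apply, Pi.add_apply] at hx this ⊢
  linarith

/-- `maxf g - T g = conjOp T (maxf g - g) ≥ (maxf g - g x) • conjOp T (ind {x})`. -/
lemma maxf_map_le_sub_mul (g : X → ℝ) (x : X) :
    maxf (T g) ≤ maxf g - (maxf g - g x) * minf (conjOp T (ind {x})) := by
  set c := maxf g
  have hcx : 0 ≤ c - g x := sub_nonneg.2 (le_maxf g x)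
  have hind : (c - g x) • ind ({x} : Set X) ≤ (fun _ => c) - g := by
    intro y
    by_cases hy : y = x
    · subst hy; simp [ind]
    · simp [ind, hy, le_maxf g y, c]
  have h := hT.conjOp_mono hind
  rw [hT.conjOp_smul hcx, hT.conjOp_const_sub] at h
  refine maxf_le fun y => ?_
  have hy := h y
  have := mul_le_mul_of_nonneg_left (minf_le (conjOp T (ind {x})) y) hcx
  simp only [Pi.smul_apply, smul_eq_mul, Pi.sub_apply] at hy
  linarith

lemma const_add_smul_map_ind_le {g : X → ℝ} {A : Set X} {α β : ℝ} (hαβ : α ≤ β)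
    (hα : ∀ y, α ≤ g y) (hβ : ∀ y ∈ A, β ≤ g y) : (fun _ => α) + (β - α) • T (ind A) ≤ T g := by
  have hind : (β - α) • ind A + (fun _ => α) ≤ g := by
    intro y
    by_cases hy : y ∈ A <;> simp [ind, hy, hα y, hβ y]
  have h := hT.mono hind
  rw [hT.map_add_const, hT.2.2 _ (sub_nonneg.2 hαβ), add_comm] at h
  exact h

theorem regAbs_of_ergodicT (hE : ErgodicT T) : RegAbs T := by
  classical
  choose c hc using hE.conjOp
  set u : X → ℝ := fun x => c (ind {x})
  have hconv : ∀ x y, Tendsto (fun n => conjOp T^[n] (ind {x}) y) atTop (𝓝 (u x)) := by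
    intro x y
    simpa only [conjOp_iterate] using tendsto_pi_nhds.1 (hc (ind {x})) y
  have hu_zero : ∀ x ∉ XRA T, u x = 0 := fun x hx =>
    le_antisymm (not_lt.1 (mt (mem_XRA_of_tendsto (hc _)) hx)) <|
      ge_of_tendsto' (hconv x x) fun n =>
        (le_minf fun y => ind_nonneg _ y).trans ((hT.iterate n).minf_le_conjOp _ _)
  constructor
  · set y := Classical.arbitrary X
    have hsum : 1 ≤ ∑ x, u x := by
      refine ge_of_tendsto' (tendsto_finsetSum _ fun x _ => hconv x y) fun n => ?_
      have h := (hT.iterate n).conjOp_ind_le_sum Finset.univ y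
      rwa [Finset.coe_univ, ind_univ, (hT.iterate n).conjOp_const, Finset.sum_apply] at h
    obtain ⟨x, -, hx⟩ := Finset.exists_lt_of_sum_lt (s := Finset.univ) (f := fun _ => 0) (g := u)
      (by simp only [Finset.sum_const_zero]; linarith)
    exact ⟨x, mem_XRA_of_tendsto (hc _) hx⟩
  · intro x hx
    set s := (XRA T)ᶜ.toFinset
    have hs : (s : Set X)ᶜ = XRA T := by simp [s]
    have hlim : Tendsto (fun n => ∑ z ∈ s, conjOp T^[n] (ind {z}) x) atTop (𝓝 0) := by
      have := tendsto_finsetSum s fun z _ => hconv z x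
      rwa [Finset.sum_eq_zero fun z hz => hu_zero z (by simpa [s] using hz)] at this
    have hev : ∀ᶠ n in atTop, 0 < T^[n] (ind (XRA T)) x := by
      filter_upwards [hlim.eventually (eventually_lt_nhds one_pos)] with n hn
      have h := (hT.iterate n).one_sub_sum_conjOp_le s x
      rw [hs] at h
      simp only [Pi.sub_apply, Finset.sum_apply] at h
      linarith
    exact ((tendsto_add_atTop_nat 1).eventually hev).exists

lemma minf_iterate_monotone (f : X → ℝ) : Monotone fun n => minf (T^[n] f) :=
  monotone_nat_of_le_succ fun n => le_minf fun x => by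
    rw [Function.iterate_succ_apply']
    exact hT.1 _ x

lemma maxf_iterate_antitone (f : X → ℝ) : Antitone fun n => maxf (T^[n] f) :=
  antitone_nat_of_succ_le fun n => maxf_le fun x => by
    rw [Function.iterate_succ_apply']
    exact hT.apply_le_maxf _ x

lemma tendsto_iterate_apply_of_mem_XRA {f : X → ℝ} {b : ℝ} {x : X}
    (hb : Tendsto (fun n => maxf (T^[n] f)) atTop (𝓝 b)) (hx : x ∈ XRA T) :
    Tendsto (fun n => T^[n] f x) atTop (𝓝 b) := by
  obtain ⟨N, hδ⟩ := hx
  set δ := minf ((conjOp T)^[N + 1] (ind {x}))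
  set B := fun n => maxf (T^[n] f)
  have hlow : ∀ n, B n - (B n - B (n + (N + 1))) / δ ≤ T^[n] f x := by
    intro n
    have h := (hT.iterate (N + 1)).maxf_map_le_sub_mul (T^[n] f) x
    rw [conjOp_iterate, ← Function.iterate_add_apply, add_comm] at h
    rw [sub_le_comm, le_div_iff₀ hδ]
    linarith
  have hlim : Tendsto (fun n => B n - (B n - B (n + (N + 1))) / δ) atTop (𝓝 b) := by
    simpa using hb.sub ((hb.sub (hb.comp (tendsto_add_atTop_nat (N + 1)))).div_const δ)
  exact tendsto_of_tendsto_of_tendsto_of_le_of_le hlim hb hlow fun n => le_maxf _ x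

lemma eventually_lt_iterate_apply {f : X → ℝ} {a b : ℝ} {A : Set X} {m : ℕ} {x : X}
    (ha : Tendsto (fun n => minf (T^[n] f)) atTop (𝓝 a))
    (hA : ∀ y ∈ A, Tendsto (fun n => T^[n] f y) atTop (𝓝 b)) (hab : a < b)
    (hx : 0 < T^[m] (ind A) x) :
    ∀ᶠ n in atTop, a < T^[n] f x := by
  set ε := T^[m] (ind A) x
  obtain ⟨b', hab', hb'b⟩ := exists_between hab
  have hA' : ∀ᶠ n in atTop, ∀ y ∈ A, b' ≤ T^[n] f y :=
    (eventually_all_finite A.toFinite).2 fun y hy =>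
      (hA y hy).eventually (eventually_ge_nhds (by linarith))
  have hmin : ∀ᶠ n in atTop, a - (b' - a) * ε < minf (T^[n] f) :=
    ha.eventually (eventually_gt_nhds (by nlinarith))
  rw [← map_add_atTop_eq_nat m, eventually_map]
  filter_upwards [hA', hmin] with n hnA hnmin
  have hna : minf (T^[n] f) ≤ a := (hT.minf_iterate_monotone f).ge_of_tendsto ha n
  have h := (hT.iterate m).const_add_smul_map_ind_le (g := T^[n] f) (hna.trans (by linarith))
    (minf_le _) hnA x
  rw [add_comm, Function.iterate_add_apply]
  simp only [Pi.add_apply, Pi.smul_apply, smul_eq_mul] at h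
  nlinarith

theorem ergodicT_of_regAbs (hRA : RegAbs T) : ErgodicT T := by
  intro f
  have hbdd : ∀ n x, minf f ≤ T^[n] f x ∧ T^[n] f x ≤ maxf f := fun n x =>
    ⟨(hT.iterate n).1 f x, (hT.iterate n).apply_le_maxf f x⟩
  obtain ⟨a, ha⟩ : ∃ a, Tendsto (fun n => minf (T^[n] f)) atTop (𝓝 a) :=
    ⟨_, tendsto_atTop_ciSup (hT.minf_iterate_monotone f) ⟨maxf f, by
      rintro _ ⟨n, rfl⟩; exact (minf_le _ (Classical.arbitrary X)).trans (hbdd n _).2⟩⟩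
  obtain ⟨b, hb⟩ : ∃ b, Tendsto (fun n => maxf (T^[n] f)) atTop (𝓝 b) :=
    ⟨_, tendsto_atTop_ciInf (hT.maxf_iterate_antitone f) ⟨minf f, by
      rintro _ ⟨n, rfl⟩; exact (hbdd n _).1.trans (le_maxf _ (Classical.arbitrary X))⟩⟩
  have hA : ∀ y ∈ XRA T, Tendsto (fun n => T^[n] f y) atTop (𝓝 b) := fun y hy =>
    hT.tendsto_iterate_apply_of_mem_XRA hb hy
  have hab : a = b := by
    by_contra hne
    have hlt : a < b := (le_of_tendsto_of_tendsto' ha hb fun n =>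
      (minf_le _ (Classical.arbitrary X)).trans (le_maxf _ _)).lt_of_ne hne
    have hev : ∀ᶠ n in atTop, ∀ x, a < T^[n] f x := eventually_all.2 fun x => by
      by_cases hx : x ∈ XRA T
      · exact (hA x hx).eventually (eventually_gt_nhds hlt)
      · obtain ⟨m, hm⟩ := hRA.2 x hx
        exact hT.eventually_lt_iterate_apply ha hA hlt hm
    obtain ⟨n, hn⟩ := hev.exists
    exact (lt_minf hn).not_ge ((hT.minf_iterate_monotone f).ge_of_tendsto ha n)
  refine ⟨a, tendsto_pi_nhds.2 fun x => ?_⟩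
  exact tendsto_of_tendsto_of_tendsto_of_le_of_le ha (hab ▸ hb) (fun n => minf_le _ x)
    fun n => le_maxf _ x

end IsLTO

/-- A lower transition operator is ergodic iff it is regularly absorbing. -/
theorem stmt14 {X : Type*} [Fintype X] [Nonempty X]
    (T : (X → ℝ) → (X → ℝ)) (hT : IsLTO T) :
    ErgodicT T ↔ RegAbs T :=
  ⟨hT.regAbs_of_ergodicT, hT.ergodicT_of_regAbs⟩
end

section
/- Let Q be a lower transition rate operator on a finite nonempty set 𝒳, and let (T_t)_{t≥0} be the associated family of operators determined by the differential equation d/dt T_t f = Q(T_t f) with T_0 f = f. Then lim_{Δ→0+} T_Δ = I and lim_{Δ→0+} (1/Δ)(T_Δ − I) = Q, both in operator norm; that is, sup{‖T_Δ f − f‖ : ‖f‖ = 1} → 0 and sup{‖(T_Δ f − f)/Δ − Q f‖ : ‖f‖ = 1} → 0 as Δ → 0 from the right. -/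
open Filter Topology

/-! A lower transition rate operator `Q` is Lipschitz for the sup norm: shifted by its norm,
`g - f` becomes a nonnegative combination of indicators, so superadditivity, invariance under
constant shifts and the nonnegative off-diagonal rates give `Q f x - Q g x ≤ 2 ‖f - g‖ |Q 𝟙ₓ x|`.
For `‖f‖ = 1` Grönwall's inequality then bounds `‖T_Δ f - f‖` by `gronwallBound 0 K K Δ`, which
vanishes as `Δ → 0⁺`, and the mean value inequality bounds `‖Δ⁻¹ (T_Δ f - f) - Q f‖` by `K` times
the same quantity. -/

open Set
open scoped NNReal

namespace IsLTRO

variable {X : Type*} [Fintype X] {Q : (X → ℝ) → (X → ℝ)}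

lemma map_zero (hQ : IsLTRO Q) : Q 0 = 0 := hQ.1 0

lemma map_add_const (hQ : IsLTRO Q) (f : X → ℝ) (c : ℝ) : Q (f + fun _ => c) = Q f := by
  refine le_antisymm ?_ ?_
  · have hcancel : (f + fun _ => c) + (fun _ => -c) = f := by ext; simp
    have h := hQ.2.1 (f + fun _ => c) (fun _ => -c)
    rwa [hcancel, hQ.1 (-c), add_zero] at h
  · simpa [hQ.1 c] using hQ.2.1 f (fun _ => c)

lemma sum_le_map_sum (hQ : IsLTRO Q) {ι : Type*} (s : Finset ι) (g : ι → X → ℝ) :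
    ∑ i ∈ s, Q (g i) ≤ Q (∑ i ∈ s, g i) :=
  Finset.le_sum_of_subadditive (fun f => OrderDual.toDual (Q f)) hQ.map_zero.ge
    (fun f g => hQ.2.1 f g) s g

lemma mul_apply_ind_le (hQ : IsLTRO Q) {g : X → ℝ} (hg : 0 ≤ g) (x : X) :
    g x * Q (ind {x}) x ≤ Q g x := by
  classical
  have hdecomp : ∑ y, g y • ind {y} = g := by
    ext z
    simp [ind, Pi.single_apply]
  have hsum := hQ.sum_le_map_sum Finset.univ (fun y => g y • ind {y}) x
  simp only [hdecomp, Finset.sum_apply, hQ.2.2.1 _ (hg _), Pi.smul_apply, smul_eq_mul] at hsum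
  rw [← Finset.add_sum_erase _ _ (Finset.mem_univ x)] at hsum
  have hoff : 0 ≤ ∑ y ∈ Finset.univ.erase x, g y * Q (ind {y}) x :=
    Finset.sum_nonneg fun y hy =>
      mul_nonneg (hg y) (hQ.2.2.2 x y (Finset.ne_of_mem_erase hy).symm)
  linarith

lemma apply_sub_apply_le (hQ : IsLTRO Q) (f g : X → ℝ) (x : X) :
    Q f x - Q g x ≤ 2 * ‖f - g‖ * |Q (ind {x}) x| := by
  set h := g - f
  set k := h + fun _ => ‖h‖
  have habs_le : ∀ y, |h y| ≤ ‖h‖ := fun y => Real.norm_eq_abs (h y) ▸ norm_le_pi_norm h y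
  have hk : 0 ≤ k := fun y => by
    simp only [k, Pi.add_apply, Pi.zero_apply]; linarith [neg_abs_le (h y), habs_le y]
  have hkx : k x ≤ 2 * ‖h‖ := by
    simp only [k, Pi.add_apply]; linarith [le_abs_self (h x), habs_le x]
  have hsup : Q f x + Q h x ≤ Q g x := by simpa [h] using hQ.2.1 f h x
  have hlow : k x * Q (ind {x}) x ≤ Q h x := hQ.map_add_const h ‖h‖ ▸ hQ.mul_apply_ind_le hk x
  have habs : -(k x * |Q (ind {x}) x|) ≤ k x * Q (ind {x}) x := by
    rw [← mul_neg]; exact mul_le_mul_of_nonneg_left (neg_abs_le _) (hk x)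
  have hmono : k x * |Q (ind {x}) x| ≤ 2 * ‖h‖ * |Q (ind {x}) x| :=
    mul_le_mul_of_nonneg_right hkx (abs_nonneg _)
  rw [norm_sub_rev]
  linarith

lemma exists_lipschitzWith (hQ : IsLTRO Q) : ∃ K : ℝ≥0, LipschitzWith K Q := by
  set C := 2 * ∑ x, |Q (ind {x}) x|
  have hC : 0 ≤ C := by positivity
  refine ⟨⟨C, hC⟩, LipschitzWith.of_dist_le_mul fun f g => ?_⟩
  rw [dist_eq_norm, dist_eq_norm]
  change ‖Q f - Q g‖ ≤ C * ‖f - g‖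
  rw [pi_norm_le_iff_of_nonneg (by positivity)]
  intro x
  have hx : |Q (ind {x}) x| ≤ ∑ y, |Q (ind {y}) y| :=
    Finset.single_le_sum (f := fun y => |Q (ind {y}) y|) (fun _ _ => abs_nonneg _)
      (Finset.mem_univ x)
  have hC' : 2 * ‖f - g‖ * |Q (ind {x}) x| ≤ C * ‖f - g‖ := by
    simp only [C]; nlinarith [norm_nonneg (f - g)]
  rw [Pi.sub_apply, Real.norm_eq_abs, abs_sub_le_iff]
  constructor
  · linarith [hQ.apply_sub_apply_le f g x]
  · have h := hQ.apply_sub_apply_le g f x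
    rw [norm_sub_rev] at h
    linarith

end IsLTRO

section LipschitzODE

variable {E : Type*} [NormedAddCommGroup E] [NormedSpace ℝ E] {F : E → E} {K : ℝ≥0}
  {u : ℝ → E} {ε t : ℝ}

lemma norm_sub_le_gronwallBound_of_hasDerivWithinAt (hF : LipschitzWith K F)
    (hu : ∀ s, 0 ≤ s → HasDerivWithinAt u (F (u s)) (Ici 0) s) (hε : ‖F (u 0)‖ ≤ ε)
    (ht : 0 ≤ t) : ‖u t - u 0‖ ≤ gronwallBound 0 K ε t := by
  have hcont : ContinuousOn (fun s => u s - u 0) (Icc 0 t) := fun s hs =>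
    ((hu s hs.1).continuousWithinAt.mono Icc_subset_Ici_self).sub continuousWithinAt_const
  have hderiv : ∀ s ∈ Ico 0 t,
      HasDerivWithinAt (fun s => u s - u 0) (F (u s)) (Ici s) s := fun s hs =>
    ((hu s hs.1).mono (Ici_subset_Ici.2 hs.1)).sub_const _
  have hbound : ∀ s ∈ Ico 0 t, ‖F (u s)‖ ≤ K * ‖u s - u 0‖ + ε := fun s _ =>
    calc ‖F (u s)‖ ≤ ‖F (u 0)‖ + ‖F (u s) - F (u 0)‖ := norm_le_norm_add_norm_sub' _ _
      _ ≤ ε + K * ‖u s - u 0‖ := by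
        gcongr
        simpa only [dist_eq_norm] using hF.dist_le_mul (u s) (u 0)
      _ = K * ‖u s - u 0‖ + ε := add_comm _ _
  simpa using norm_le_gronwallBound_of_norm_deriv_right_le hcont hderiv (by simp) hbound t
    ⟨ht, le_rfl⟩

lemma norm_inv_smul_sub_sub_le_of_hasDerivWithinAt (hF : LipschitzWith K F)
    (hu : ∀ s, 0 ≤ s → HasDerivWithinAt u (F (u s)) (Ici 0) s) (hε : ‖F (u 0)‖ ≤ ε)
    (ht : 0 < t) : ‖t⁻¹ • (u t - u 0) - F (u 0)‖ ≤ K * gronwallBound 0 K ε t := by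
  have hcont : ContinuousOn (fun s => u s - s • F (u 0)) (Icc 0 t) := fun s hs =>
    ((hu s hs.1).continuousWithinAt.mono Icc_subset_Ici_self).sub
      (continuous_id.smul continuous_const).continuousWithinAt
  have hderiv : ∀ s ∈ Ico 0 t, HasDerivWithinAt (fun s => u s - s • F (u 0))
      (F (u s) - F (u 0)) (Ici s) s := fun s hs =>
    ((hu s hs.1).mono (Ici_subset_Ici.2 hs.1)).sub
      (by simpa using ((hasDerivAt_id s).smul_const (F (u 0))).hasDerivWithinAt)
  have hbound : ∀ s ∈ Ico 0 t, ‖F (u s) - F (u 0)‖ ≤ K * gronwallBound 0 K ε t := fun s hs =>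
    calc ‖F (u s) - F (u 0)‖ ≤ K * ‖u s - u 0‖ := by
          simpa only [dist_eq_norm] using hF.dist_le_mul (u s) (u 0)
      _ ≤ K * gronwallBound 0 K ε s := by
          gcongr; exact norm_sub_le_gronwallBound_of_hasDerivWithinAt hF hu hε hs.1
      _ ≤ K * gronwallBound 0 K ε t := by
          gcongr
          exact gronwallBound_mono le_rfl ((norm_nonneg _).trans hε) K.2 hs.2.le
  have hmvt := norm_image_sub_le_of_norm_deriv_right_le_segment hcont hderiv hbound t
    ⟨ht.le, le_rfl⟩
  rw [zero_smul, sub_zero, sub_zero] at hmvt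
  have hrw : t⁻¹ • (u t - u 0) - F (u 0) = t⁻¹ • (u t - t • F (u 0) - u 0) := by
    simp only [smul_sub, smul_smul, inv_mul_cancel₀ ht.ne', one_smul]
    abel
  rw [hrw, norm_smul, Real.norm_eq_abs, abs_of_pos (inv_pos.2 ht)]
  calc t⁻¹ * _ ≤ t⁻¹ * (K * gronwallBound 0 K ε t * t) := by gcongr
    _ = K * gronwallBound 0 K ε t := by field_simp

end LipschitzODE

lemma tendsto_gronwallBound_zero_nhdsGT (K ε : ℝ) :
    Tendsto (gronwallBound 0 K ε) (𝓝[>] 0) (𝓝 0) := by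
  have h := (hasDerivAt_gronwallBound 0 K ε 0).continuousAt.tendsto
  rw [gronwallBound_x0] at h
  exact h.mono_left nhdsWithin_le_nhds

lemma exists_pos_forall_norm_lt_of_le_of_tendsto {α E : Type*} [Norm E] {p : α → Prop}
    {G : ℝ → α → E} {φ : ℝ → ℝ} (hφ : Tendsto φ (𝓝[>] 0) (𝓝 0))
    (hG : ∀ Δ, 0 < Δ → ∀ a, p a → ‖G Δ a‖ ≤ φ Δ) :
    ∀ ε : ℝ, 0 < ε → ∃ δ : ℝ, 0 < δ ∧ ∀ Δ : ℝ, 0 < Δ → Δ < δ → ∀ a, p a → ‖G Δ a‖ < ε := by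
  intro ε hε
  obtain ⟨δ, hδ, hφδ⟩ := Metric.tendsto_nhdsWithin_nhds.1 hφ ε hε
  refine ⟨δ, hδ, fun Δ hΔ hΔδ a ha => (hG Δ hΔ a ha).trans_lt ?_⟩
  have := hφδ (mem_Ioi.2 hΔ) (by rwa [Real.dist_eq, sub_zero, abs_of_pos hΔ])
  exact (le_abs_self _).trans_lt (by simpa [Real.dist_eq] using this)

theorem stmt17_general {X : Type*} [Fintype X]
    (Q : (X → ℝ) → (X → ℝ)) (hQ : IsLTRO Q)
    (T : ℝ → (X → ℝ) → (X → ℝ)) (hT : IsSol Q T) :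
    (∀ ε : ℝ, 0 < ε → ∃ δ : ℝ, 0 < δ ∧
        ∀ Δ : ℝ, 0 < Δ → Δ < δ → ∀ f : X → ℝ, ‖f‖ = 1 → ‖T Δ f - f‖ < ε) ∧
      (∀ ε : ℝ, 0 < ε → ∃ δ : ℝ, 0 < δ ∧
        ∀ Δ : ℝ, 0 < Δ → Δ < δ → ∀ f : X → ℝ, ‖f‖ = 1 →
          ‖Δ⁻¹ • (T Δ f - f) - Q f‖ < ε) := by
  obtain ⟨K, hK⟩ := hQ.exists_lipschitzWith
  have hQf : ∀ f : X → ℝ, ‖f‖ = 1 → ‖Q (T 0 f)‖ ≤ K := fun f hf => by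
    simpa [hT.1 f, hf] using hK.norm_le_mul hQ.map_zero f
  constructor
  · refine exists_pos_forall_norm_lt_of_le_of_tendsto (tendsto_gronwallBound_zero_nhdsGT K K)
      fun Δ hΔ f hf => ?_
    simpa [hT.1 f] using
      norm_sub_le_gronwallBound_of_hasDerivWithinAt hK (hT.2 f) (hQf f hf) hΔ.le
  · have hφ : Tendsto (fun Δ => K * gronwallBound 0 K K Δ) (𝓝[>] 0) (𝓝 0) := by
      simpa using (tendsto_gronwallBound_zero_nhdsGT K K).const_mul (K : ℝ)
    refine exists_pos_forall_norm_lt_of_le_of_tendsto hφ fun Δ hΔ f hf => ?_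
    simpa [hT.1 f] using
      norm_inv_smul_sub_sub_le_of_hasDerivWithinAt hK (hT.2 f) (hQf f hf) hΔ

/-- `lim_{Δ→0⁺} T_Δ = I` and `lim_{Δ→0⁺} (1/Δ)(T_Δ − I) = Q`, in operator norm. -/
theorem stmt17 {X : Type*} [Fintype X] [Nonempty X]
    (Q : (X → ℝ) → (X → ℝ)) (hQ : IsLTRO Q)
    (T : ℝ → (X → ℝ) → (X → ℝ)) (hT : IsSol Q T) :
    (∀ ε : ℝ, 0 < ε → ∃ δ : ℝ, 0 < δ ∧
        ∀ Δ : ℝ, 0 < Δ → Δ < δ → ∀ f : X → ℝ, ‖f‖ = 1 → ‖T Δ f - f‖ < ε) ∧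
      (∀ ε : ℝ, 0 < ε → ∃ δ : ℝ, 0 < δ ∧
        ∀ Δ : ℝ, 0 < Δ → Δ < δ → ∀ f : X → ℝ, ‖f‖ = 1 →
          ‖Δ⁻¹ • (T Δ f - f) - Q f‖ < ε) :=
  stmt17_general Q hQ T hT
end
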